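/- arXiv:0811.3383 — 3 statements merged into one kernel-verified Lean document; each statement's English description precedes it below -/
import Mathlib

section
/- Let Ω ⊂ ℝ^d be a hypercube partitioned into pairwise disjoint grid cells {E_j}_{j=1}^M, each a hypercube of edge length h > 0 (so L^d(E_j) = h^d). Let g : Ω → Ω be the piecewise translation g(x) = x + u(x)·Δt, where u is constant equal to u_j on each E_j and the CFL condition Δt·max_j ‖u_j‖ ≤ h holds (‖·‖ a fixed norm on ℝ^d). Then there exists a constant c > 0 depending only on the dimension d such that L^d(g⁻¹(E)) ≤ c·L^d(E) for every Borel set E ⊆ Ω. -/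
/-!
A point of the image of a cell `E j` under its translation by `v j = Δt • u j` lies within `h`
(coordinatewise) of `E j`, so every cell whose translate contains a given point `x` lies in the
closed box of half-width `2h` around `x`. The cells are disjoint of volume `h ^ d` and that box has
volume `(4h) ^ d`, so each point is covered by at most `4 ^ d` translated cells. Since translations
preserve Lebesgue measure, `L^d(E j ∩ g⁻¹ F) ≤ L^d(F ∩ (E j + v j))`, and summing over `j` with
this overlap bound gives `L^d(Ω ∩ g⁻¹ F) ≤ 4 ^ d L^d(F)`.
-/

open MeasureTheory

/-- A (half-open) axis-aligned hypercube of edge length `h` in `ℝ^d`. -/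
def IsCube {d : ℕ} (s : Set (EuclideanSpace ℝ (Fin d))) (h : ℝ) : Prop :=
  ∃ a : EuclideanSpace ℝ (Fin d), s = {x | ∀ i, a i ≤ x i ∧ x i < a i + h}

open Set
open scoped ENNReal

theorem EuclideanSpace.volume_setOf_forall_mem {ι : Type*} [Fintype ι] (s : ι → Set ℝ) :
    volume {x : EuclideanSpace ℝ ι | ∀ i, x i ∈ s i} = ∏ i, volume (s i) := by
  have : {x : EuclideanSpace ℝ ι | ∀ i, x i ∈ s i} =
      (MeasurableEquiv.toLp 2 (ι → ℝ)).symm ⁻¹' univ.pi s := by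
    ext; simp
  rw [this, (volume_preserving_symm_measurableEquiv_toLp ι).measure_preimage_equiv, volume_pi_pi]

namespace IsCube

variable {d : ℕ} {s : Set (EuclideanSpace ℝ (Fin d))} {h : ℝ}

theorem volume_eq (hs : IsCube s h) : volume s = ENNReal.ofReal h ^ d := by
  obtain ⟨a, rfl⟩ := hs
  simpa [Real.volume_Ico] using EuclideanSpace.volume_setOf_forall_mem fun i => Ico (a i) (a i + h)

theorem measurableSet (hs : IsCube s h) : MeasurableSet s := by
  obtain ⟨a, rfl⟩ := hs
  measurability

theorem subset_box_of_mem_image_add (hs : IsCube s h) {v x : EuclideanSpace ℝ (Fin d)}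
    (hv : ∀ i, |v i| ≤ h) (hx : x ∈ (· + v) '' s) :
    s ⊆ {y | ∀ i, y i ∈ Icc (x i - 2 * h) (x i + 2 * h)} := by
  obtain ⟨a, rfl⟩ := hs
  obtain ⟨z, hz, rfl⟩ := hx
  intro y hy i
  have := hz i; have := hy i; have := abs_le.mp (hv i)
  simp only [PiLp.add_apply, mem_Icc]
  constructor <;> linarith

end IsCube

theorem measure_inter_preimage_le_of_eqOn_add_const {G : Type*} [MeasurableSpace G] [AddGroup G]
    [MeasurableAdd G] (μ : Measure G) [μ.IsAddRightInvariant] {g : G → G} {s : Set G} {v : G}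
    (hg : EqOn g (· + v) s) (F : Set G) :
    μ (s ∩ g ⁻¹' F) ≤ μ (F ∩ (· + v) '' s) := by
  calc μ (s ∩ g ⁻¹' F) ≤ μ ((· + v) ⁻¹' (F ∩ (· + v) '' s)) := by
        refine measure_mono fun x ⟨hxs, hxF⟩ => ⟨?_, x, hxs, rfl⟩
        simpa [hg hxs] using hxF
    _ = μ (F ∩ (· + v) '' s) := measure_preimage_add_right μ v _

theorem sum_measure_inter_le_of_encard_le {α ι : Type*} [MeasurableSpace α] [Fintype ι]
    (μ : Measure α) {A : ι → Set α} (hA : ∀ j, MeasurableSet (A j)) {N : ℕ}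
    (hN : ∀ x, {j | x ∈ A j}.encard ≤ N) (F : Set α) :
    ∑ j, μ (F ∩ A j) ≤ N * μ F := by
  calc ∑ j, μ (F ∩ A j) = Measure.sum (fun j => μ.restrict (A j)) F := by
        simp [Measure.sum_fintype, Measure.restrict_apply' (hA _)]
    _ ≤ (N • μ.restrict (⋃ j, A j)) F := Measure.sum_restrict_le hA hN F
    _ ≤ N * μ F := by
        rw [Measure.smul_apply, nsmul_eq_mul]
        gcongr
        exact Measure.restrict_le_self

theorem encard_le_of_pairwise_disjoint_subset {α ι : Type*} [MeasurableSpace α] (μ : Measure α)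
    {E : ι → Set α} (hdisj : Pairwise (Function.onFun Disjoint E)) (hE : ∀ j, MeasurableSet (E j))
    {m : ℝ≥0∞} (hm : ∀ j, μ (E j) = m) (hm0 : m ≠ 0) (hmtop : m ≠ ∞)
    {S : Set ι} (hS : S.Finite) {B : Set α} (hSB : ∀ j ∈ S, E j ⊆ B) {N : ℕ} (hB : μ B ≤ N * m) :
    S.encard ≤ N := by
  lift S to Finset ι using hS
  have hcard : (S.card : ℝ≥0∞) * m ≤ N * m := calc
    (S.card : ℝ≥0∞) * m = μ (⋃ j ∈ S, E j) := by
      rw [measure_biUnion_finset (hdisj.set_pairwise _) fun j _ => hE j]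
      simp [hm]
    _ ≤ μ B := measure_mono (iUnion₂_subset hSB)
    _ ≤ N * m := hB
  rw [encard_coe_eq_coe_finsetCard]
  exact_mod_cast (ENNReal.mul_le_mul_iff_left hm0 hmtop).mp hcard

theorem encard_setOf_mem_image_add_le {ι : Type*} [Finite ι] {d : ℕ}
    {E : ι → Set (EuclideanSpace ℝ (Fin d))} {h : ℝ} (hh : 0 < h) (hE : ∀ j, IsCube (E j) h)
    (hdisj : Pairwise (Function.onFun Disjoint E)) {v : ι → EuclideanSpace ℝ (Fin d)}
    (hv : ∀ j i, |v j i| ≤ h) (x : EuclideanSpace ℝ (Fin d)) :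
    {j | x ∈ (· + v j) '' E j}.encard ≤ (4 ^ d : ℕ) := by
  refine encard_le_of_pairwise_disjoint_subset volume hdisj (fun j => (hE j).measurableSet)
    (fun j => (hE j).volume_eq) (by simp [hh]) (by simp) (toFinite _)
    (fun j hj => (hE j).subset_box_of_mem_image_add (hv j) hj) (le_of_eq ?_)
  rw [EuclideanSpace.volume_setOf_forall_mem]
  simp only [Real.volume_Icc, add_sub_sub_cancel, Finset.prod_const, Finset.card_univ,
    Fintype.card_fin, Nat.cast_pow, Nat.cast_ofNat]
  rw [← mul_pow, show 2 * h + 2 * h = 4 * h by ring, ENNReal.ofReal_mul (by norm_num)]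
  norm_num

theorem stmt_7_general (d : ℕ) :
    ∃ c : ℝ, 0 < c ∧
      ∀ (M : ℕ) (Ω : Set (EuclideanSpace ℝ (Fin d))) (LΩ : ℝ), IsCube Ω LΩ →
      ∀ (E : Fin M → Set (EuclideanSpace ℝ (Fin d))) (h : ℝ), 0 < h →
      (∀ j, IsCube (E j) h) → Pairwise (Function.onFun Disjoint E) → (⋃ j, E j) = Ω →
      ∀ (u : Fin M → EuclideanSpace ℝ (Fin d)) (Δt : ℝ), 0 < Δt →
      (∀ j, Δt * ‖u j‖ ≤ h) →
      ∀ g : EuclideanSpace ℝ (Fin d) → EuclideanSpace ℝ (Fin d),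
        (∀ j, ∀ x ∈ E j, g x = x + Δt • u j) → (∀ x ∈ Ω, g x ∈ Ω) →
      ∀ F : Set (EuclideanSpace ℝ (Fin d)), MeasurableSet F → F ⊆ Ω →
        volume (Ω ∩ g ⁻¹' F) ≤ ENNReal.ofReal c * volume F := by
  refine ⟨4 ^ d, by positivity, ?_⟩
  intro M Ω _ _ E h hh hE hdisj hunion u Δt hΔt hCFL g hg _ F _ _
  have hv : ∀ j i, |(Δt • u j) i| ≤ h := fun j i => calc
    |(Δt • u j) i| ≤ ‖Δt • u j‖ := (Real.norm_eq_abs _).symm.trans_le (PiLp.norm_apply_le _ i)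
    _ = Δt * ‖u j‖ := by rw [norm_smul, Real.norm_of_nonneg hΔt.le]
    _ ≤ h := hCFL j
  calc volume (Ω ∩ g ⁻¹' F) = volume (⋃ j, E j ∩ g ⁻¹' F) := by rw [← hunion, iUnion_inter]
    _ ≤ ∑ j, volume (E j ∩ g ⁻¹' F) := measure_iUnion_fintype_le _ _
    _ ≤ ∑ j, volume (F ∩ (· + Δt • u j) '' E j) := Finset.sum_le_sum fun j _ =>
        measure_inter_preimage_le_of_eqOn_add_const volume (hg j) F
    _ ≤ (4 ^ d : ℕ) * volume F := sum_measure_inter_le_of_encard_le volume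
        (fun j => (MeasurableEquiv.addRight _).measurableSet_image.mpr (hE j).measurableSet)
        (encard_setOf_mem_image_add_le hh hE hdisj hv) F
    _ = ENNReal.ofReal (4 ^ d) * volume F := by simp [ENNReal.ofReal_pow]

/-- For a piecewise translation `g x = x + Δt • u x` (with `u`
constant on each grid cell of a partition of the hypercube `Ω` into hypercubes of
edge `h`) satisfying the CFL condition `Δt·max_j ‖u j‖ ≤ h`, there is a constant
`c > 0` depending only on the dimension `d` with `L^d(g⁻¹(E)) ≤ c·L^d(E)` for all
Borel `E ⊆ Ω`. -/
theorem stmt_7 (d : ℕ) (hd : 0 < d) :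
    ∃ c : ℝ, 0 < c ∧
      ∀ (M : ℕ) (Ω : Set (EuclideanSpace ℝ (Fin d))) (LΩ : ℝ), IsCube Ω LΩ →
      ∀ (E : Fin M → Set (EuclideanSpace ℝ (Fin d))) (h : ℝ), 0 < h →
      (∀ j, IsCube (E j) h) → Pairwise (Function.onFun Disjoint E) → (⋃ j, E j) = Ω →
      ∀ (u : Fin M → EuclideanSpace ℝ (Fin d)) (Δt : ℝ), 0 < Δt →
      (∀ j, Δt * ‖u j‖ ≤ h) →
      ∀ g : EuclideanSpace ℝ (Fin d) → EuclideanSpace ℝ (Fin d),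
        (∀ j, ∀ x ∈ E j, g x = x + Δt • u j) → (∀ x ∈ Ω, g x ∈ Ω) →
      ∀ F : Set (EuclideanSpace ℝ (Fin d)), MeasurableSet F → F ⊆ Ω →
        volume (Ω ∩ g ⁻¹' F) ≤ ENNReal.ofReal c * volume F :=
  stmt_7_general d
end

section
/- Let Ω ⊂ ℝ² be a bounded Borel set with |x| ≤ C_Ω for all x ∈ Ω, let R > 0, β ≥ 0, let ω : [0,∞) → [0,∞) be nonincreasing, and let ρ ∈ L¹(Ω) with ρ ≥ 0 a.e. Define the interaction velocity ν(x) = β · ∫_Ω (y − x) χ_{B_R(x)}(y) ω(ρ(y)) dy, where B_R(x) is the closed Euclidean disk of radius R centered at x. Then ν is Lipschitz continuous on Ω: |ν(x₂) − ν(x₁)| ≤ β·ω(0)·R·(8C_Ω + πR)·|x₂ − x₁| for all x₁, x₂ ∈ Ω. -/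
/-!
Write `ν(x) = β ∫_Ω 1_{B(x)}(y) w(y) (y - x) dy` with `w = ω ∘ ρ`, so `0 ≤ w ≤ ω 0` a.e.
The integrand of `ν(x₂) - ν(x₁)` splits as
`(1_{B(x₂)} - 1_{B(x₁)}) w (y - x₂) + 1_{B(x₁)} w (x₁ - x₂)`.
The first term lives on the symmetric difference of the two disks, whose area is at most
`4R|x₂ - x₁|`, and is bounded there by `2C_Ω ω(0)`; the second is bounded by `ω(0)|x₂ - x₁|` on a
disk of area `πR²`. For the area bound, reflect `x₂ - x₁` onto a coordinate axis: the part
of the shifted disk outside the original one then lies between the graphs of `√(R² - t²)` and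
`√(R² - t²) + |x₂ - x₁|` over `[-R, R]`.
-/

open MeasureTheory Metric Set
open scoped symmDiff

theorem ball_single_sdiff_closedBall_subset_regionBetween {R d : ℝ} (hR : 0 < R) (hd : 0 ≤ d) :
    ball (EuclideanSpace.single (1 : Fin 2) d) R \ closedBall 0 R ⊆
      (fun p : EuclideanSpace ℝ (Fin 2) => (p 0, p 1)) ⁻¹'
        regionBetween (fun t => √(R ^ 2 - t ^ 2)) (fun t => √(R ^ 2 - t ^ 2) + d) (Icc (-R) R) := by
  rintro p ⟨hin, hout⟩
  rw [mem_ball, EuclideanSpace.dist_eq, Real.sqrt_lt' hR, Fin.sum_univ_two] at hin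
  rw [mem_closedBall, EuclideanSpace.dist_eq, not_le, Real.lt_sqrt hR.le, Fin.sum_univ_two] at hout
  simp only [PiLp.single_apply, Real.dist_eq, sq_abs] at hin hout
  norm_num at hin hout
  set a := √(R ^ 2 - p 0 ^ 2)
  have ha0 : 0 ≤ a := Real.sqrt_nonneg _
  have ha : a ^ 2 = R ^ 2 - p 0 ^ 2 := Real.sq_sqrt (by nlinarith)
  obtain ⟨hlow, hup⟩ := abs_lt_of_sq_lt_sq' (show (p 1 - d) ^ 2 < a ^ 2 by linarith) ha0
  exact ⟨⟨by nlinarith, by nlinarith⟩, show a < p 1 by nlinarith, show p 1 < a + d by linarith⟩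

theorem volume_ball_single_sdiff_closedBall_le {R d : ℝ} (hR : 0 < R) (hd : 0 ≤ d) :
    volume (ball (EuclideanSpace.single (1 : Fin 2) d) R \ closedBall 0 R) ≤
      ENNReal.ofReal (2 * R * d) := by
  have hk : MeasurePreserving (fun p : EuclideanSpace ℝ (Fin 2) => (p 0, p 1)) :=
    (volume_preserving_finTwoArrow ℝ).comp
      (EuclideanSpace.volume_preserving_symm_measurableEquiv_toLp (Fin 2))
  have hg : Measurable fun t : ℝ => √(R ^ 2 - t ^ 2) := by fun_prop
  calc volume (ball (EuclideanSpace.single (1 : Fin 2) d) R \ closedBall 0 R)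
      ≤ volume (regionBetween (fun t => √(R ^ 2 - t ^ 2)) (fun t => √(R ^ 2 - t ^ 2) + d)
          (Icc (-R) R)) := by
        rw [← hk.measure_preimage
          (measurableSet_regionBetween hg (hg.add_const d) measurableSet_Icc).nullMeasurableSet]
        exact measure_mono (ball_single_sdiff_closedBall_subset_regionBetween hR hd)
    _ = ENNReal.ofReal (2 * R * d) := by
        rw [Measure.volume_eq_prod, volume_regionBetween_eq_lintegral' hg (hg.add_const d)
          measurableSet_Icc]
        simp [Real.volume_Icc, ← ENNReal.ofReal_mul hd]
        ring_nf

theorem volume_closedBall_sdiff_closedBall_le {R : ℝ} (hR : 0 < R)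
    (x₁ x₂ : EuclideanSpace ℝ (Fin 2)) :
    volume (closedBall x₂ R \ closedBall x₁ R) ≤ ENNReal.ofReal (2 * R * ‖x₂ - x₁‖) := by
  set d := ‖x₂ - x₁‖
  set v := EuclideanSpace.single (1 : Fin 2) d
  let f := (ℝ ∙ (x₂ - x₁ - v))ᗮ.reflection
  have hfx : f (x₂ - x₁) = v := Submodule.reflection_sub (by simp [v, d])
  have hT : MeasurePreserving (fun y => f (y - x₁)) :=
    f.measurePreserving.comp (measurePreserving_sub_right volume x₁)
  have hpre : (fun y => f (y - x₁)) ⁻¹' (closedBall v R \ closedBall 0 R) =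
      closedBall x₂ R \ closedBall x₁ R := by
    ext y
    simp only [mem_preimage, mem_sdiff, mem_closedBall, ← hfx, f.dist_map, dist_sub_right,
      dist_zero_right, f.norm_map, dist_eq_norm y x₁]
  have hsphere : closedBall v R \ closedBall 0 R ⊆ (ball v R \ closedBall 0 R) ∪ sphere v R := by
    rintro y ⟨hy, hy₀⟩
    rcases (mem_closedBall.1 hy).lt_or_eq with hlt | heq
    exacts [Or.inl ⟨hlt, hy₀⟩, Or.inr heq]
  calc volume (closedBall x₂ R \ closedBall x₁ R)
      = volume (closedBall v R \ closedBall 0 R) := by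
        rw [← hpre, hT.measure_preimage
          (measurableSet_closedBall.diff measurableSet_closedBall).nullMeasurableSet]
    _ ≤ volume (ball v R \ closedBall 0 R) + volume (sphere v R) :=
        (measure_mono hsphere).trans (measure_union_le _ _)
    _ ≤ ENNReal.ofReal (2 * R * d) := by
        rw [Measure.addHaar_sphere, add_zero]
        exact volume_ball_single_sdiff_closedBall_le hR (norm_nonneg _)

theorem volume_closedBall_symmDiff_closedBall_le {R : ℝ} (hR : 0 < R)
    (x₁ x₂ : EuclideanSpace ℝ (Fin 2)) :
    volume (closedBall x₂ R ∆ closedBall x₁ R) ≤ ENNReal.ofReal (4 * R * ‖x₂ - x₁‖) := by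
  calc volume (closedBall x₂ R ∆ closedBall x₁ R)
      ≤ volume (closedBall x₂ R \ closedBall x₁ R) + volume (closedBall x₁ R \ closedBall x₂ R) :=
        measure_union_le _ _
    _ ≤ ENNReal.ofReal (2 * R * ‖x₂ - x₁‖) + ENNReal.ofReal (2 * R * ‖x₁ - x₂‖) :=
        add_le_add (volume_closedBall_sdiff_closedBall_le hR x₁ x₂)
          (volume_closedBall_sdiff_closedBall_le hR x₂ x₁)
    _ = ENNReal.ofReal (4 * R * ‖x₂ - x₁‖) := by
        rw [norm_sub_rev x₁, ← ENNReal.ofReal_add (by positivity) (by positivity)]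
        ring_nf

theorem abs_indicator_le_indicator_const {α : Type*} {w : α → ℝ} {M : ℝ} {y : α}
    (hM : |w y| ≤ M) (A : Set α) : |A.indicator w y| ≤ A.indicator (fun _ => M) y := by
  by_cases hy : y ∈ A <;> simp [hy, hM]

section IndicatorIntegral

variable {E : Type*} [NormedAddCommGroup E] [NormedSpace ℝ E]

theorem norm_indicator_smul_sub_sub_le {A₁ A₂ : Set E} {w : E → ℝ} {M D : ℝ} {x₁ x₂ y : E}
    (hM : |w y| ≤ M) (hD : ‖y - x₂‖ ≤ D) :
    ‖A₂.indicator w y • (y - x₂) - A₁.indicator w y • (y - x₁)‖ ≤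
      (A₂ ∆ A₁).indicator (fun _ => M) y * D + A₁.indicator (fun _ => M) y * ‖x₂ - x₁‖ := by
  have hM₀ : 0 ≤ M := (abs_nonneg _).trans hM
  calc ‖A₂.indicator w y • (y - x₂) - A₁.indicator w y • (y - x₁)‖
      = ‖(A₂.indicator w y - A₁.indicator w y) • (y - x₂) + A₁.indicator w y • (x₁ - x₂)‖ := by
        congr 1
        simp only [sub_smul, smul_sub]
        abel
    _ ≤ |(A₂ ∆ A₁).indicator w y| * ‖y - x₂‖ + |A₁.indicator w y| * ‖x₂ - x₁‖ := by
        rw [abs_indicator_symmDiff, norm_sub_rev x₂ x₁, ← Real.norm_eq_abs, ← Real.norm_eq_abs,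
          ← norm_smul, ← norm_smul]
        exact norm_add_le _ _
    _ ≤ (A₂ ∆ A₁).indicator (fun _ => M) y * D + A₁.indicator (fun _ => M) y * ‖x₂ - x₁‖ := by
        gcongr
        · exact indicator_nonneg (fun _ _ => hM₀) y
        · exact abs_indicator_le_indicator_const hM _
        · exact abs_indicator_le_indicator_const hM _

variable [MeasurableSpace E] [BorelSpace E] [SecondCountableTopology E]
  {μ : Measure E} [IsFiniteMeasure μ] {w : E → ℝ} {M C : ℝ}

theorem integrable_indicator_smul_sub {A : Set E} (hA : MeasurableSet A)
    (hw : AEStronglyMeasurable w μ) (hM : ∀ᵐ y ∂μ, |w y| ≤ M) (hC : ∀ᵐ y ∂μ, ‖y‖ ≤ C)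
    {x : E} (hx : ‖x‖ ≤ C) :
    Integrable (fun y => A.indicator w y • (y - x)) μ := by
  refine Integrable.of_bound ((hw.indicator hA).smul (by fun_prop)) (M * (C + C)) ?_
  filter_upwards [hM, hC] with y hMy hCy
  rw [norm_smul]
  exact mul_le_mul ((norm_indicator_le_norm_self w y).trans hMy)
    ((norm_sub_le y x).trans (add_le_add hCy hx)) (norm_nonneg _) ((abs_nonneg _).trans hMy)

theorem norm_integral_indicator_smul_sub_sub_le [CompleteSpace E] {A₁ A₂ : Set E}
    (hA₁ : MeasurableSet A₁) (hA₂ : MeasurableSet A₂)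
    (hw : AEStronglyMeasurable w μ) (hM : ∀ᵐ y ∂μ, |w y| ≤ M) (hC : ∀ᵐ y ∂μ, ‖y‖ ≤ C)
    {x₁ x₂ : E} (hx₁ : ‖x₁‖ ≤ C) (hx₂ : ‖x₂‖ ≤ C) :
    ‖∫ y, A₂.indicator w y • (y - x₂) ∂μ - ∫ y, A₁.indicator w y • (y - x₁) ∂μ‖ ≤
      M * (μ.real (A₂ ∆ A₁) * (2 * C) + μ.real A₁ * ‖x₂ - x₁‖) := by
  have hG : Integrable (fun y => (A₂ ∆ A₁).indicator (fun _ => M) y * (2 * C) +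
      A₁.indicator (fun _ => M) y * ‖x₂ - x₁‖) μ :=
    (((integrable_const M).indicator (hA₂.symmDiff hA₁)).mul_const _).add
      (((integrable_const M).indicator hA₁).mul_const _)
  rw [← integral_sub (integrable_indicator_smul_sub hA₂ hw hM hC hx₂)
    (integrable_indicator_smul_sub hA₁ hw hM hC hx₁)]
  refine (norm_integral_le_of_norm_le hG ?_).trans_eq ?_
  · filter_upwards [hM, hC] with y hMy hCy
    exact norm_indicator_smul_sub_sub_le hMy <|
      (norm_sub_le y x₂).trans ((add_le_add hCy hx₂).trans_eq (two_mul C).symm)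
  · rw [integral_add (((integrable_const M).indicator (hA₂.symmDiff hA₁)).mul_const _)
      (((integrable_const M).indicator hA₁).mul_const _), integral_mul_const, integral_mul_const,
      integral_indicator_const _ (hA₂.symmDiff hA₁), integral_indicator_const _ hA₁]
    simp only [smul_eq_mul]
    ring

end IndicatorIntegral

theorem measureReal_restrict_le_of_le_ofReal {α : Type*} [MeasurableSpace α] {μ : Measure α}
    {s t : Set α} {r : ℝ} (hr : 0 ≤ r) (h : μ t ≤ ENNReal.ofReal r) : (μ.restrict s).real t ≤ r :=
  ENNReal.toReal_le_of_le_ofReal hr ((Measure.restrict_apply_le _ _).trans h)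

theorem volume_closedBall_fin_two_eq_ofReal (x : EuclideanSpace ℝ (Fin 2)) {R : ℝ} (hR : 0 ≤ R) :
    volume (closedBall x R) = ENNReal.ofReal (Real.pi * R ^ 2) := by
  rw [EuclideanSpace.volume_closedBall_fin_two, ← ENNReal.ofReal_pow hR,
    ← ENNReal.ofReal_mul (by positivity), mul_comm]

theorem AntitoneOn.aemeasurable_comp {α : Type*} [MeasurableSpace α] {μ : Measure α}
    {ω : ℝ → ℝ} (hω : AntitoneOn ω (Ici 0)) {ρ : α → ℝ} (hρ : AEMeasurable ρ μ)
    (hρ₀ : 0 ≤ᵐ[μ] ρ) : AEMeasurable (fun y => ω (ρ y)) μ := by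
  have hanti : Antitone fun t => ω (max 0 t) := fun s t hst =>
    hω (mem_Ici.2 (le_max_left 0 s)) (mem_Ici.2 (le_max_left 0 t)) (max_le_max le_rfl hst)
  refine (hanti.measurable.comp_aemeasurable hρ).congr ?_
  filter_upwards [hρ₀] with y hy
  simp [max_eq_right (show 0 ≤ ρ y from hy)]

/-- The nonlocal interaction velocity
`ν(x) = β ∫_Ω (y − x) χ_{B_R(x)}(y) ω(ρ(y)) dy` (with `Ω ⊂ ℝ²` bounded by `C_Ω`,
`ω : [0,∞) → [0,∞)` nonincreasing, `ρ ≥ 0` a.e. integrable) is Lipschitz on `Ω`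
with constant `β·ω(0)·R·(8C_Ω + πR)`. -/
theorem stmt_17 (Ω : Set (EuclideanSpace ℝ (Fin 2))) (hΩ : MeasurableSet Ω)
    (CΩ : ℝ) (hCΩ : ∀ x ∈ Ω, ‖x‖ ≤ CΩ)
    (R β : ℝ) (hR : 0 < R) (hβ : 0 ≤ β)
    (ω : ℝ → ℝ)
    (hωmono : ∀ s t : ℝ, 0 ≤ s → s ≤ t → ω t ≤ ω s)
    (hωpos : ∀ s : ℝ, 0 ≤ s → 0 ≤ ω s)
    (ρ : EuclideanSpace ℝ (Fin 2) → ℝ)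
    (hρint : IntegrableOn ρ Ω) (hρpos : 0 ≤ᵐ[volume.restrict Ω] ρ)
    (ν : EuclideanSpace ℝ (Fin 2) → EuclideanSpace ℝ (Fin 2))
    (hν : ∀ x, ν x = β • ∫ y in Ω,
      Set.indicator (Metric.closedBall x R) (fun z => ω (ρ z)) y • (y - x)) :
    ∀ x₁ ∈ Ω, ∀ x₂ ∈ Ω,
      ‖ν x₂ - ν x₁‖ ≤ β * ω 0 * R * (8 * CΩ + Real.pi * R) * ‖x₂ - x₁‖ := by
  intro x₁ hx₁ x₂ hx₂
  have hΩbdd : Bornology.IsBounded Ω :=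
    isBounded_closedBall.subset fun x hx => mem_closedBall_zero_iff.2 (hCΩ x hx)
  have : IsFiniteMeasure (volume.restrict Ω) := isFiniteMeasure_restrict.2 hΩbdd.measure_lt_top.ne
  have hw : AEStronglyMeasurable (fun y => ω (ρ y)) (volume.restrict Ω) :=
    (AntitoneOn.aemeasurable_comp (fun s hs t _ hst => hωmono s t hs hst) hρint.aemeasurable
      hρpos).aestronglyMeasurable
  have hM : ∀ᵐ y ∂volume.restrict Ω, |ω (ρ y)| ≤ ω 0 := by
    filter_upwards [hρpos] with y hy
    exact (abs_of_nonneg (hωpos _ hy)).trans_le (hωmono 0 _ le_rfl hy)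
  have hsymm := measureReal_restrict_le_of_le_ofReal (s := Ω) (by positivity)
    (volume_closedBall_symmDiff_closedBall_le hR x₁ x₂)
  have hdisk := measureReal_restrict_le_of_le_ofReal (s := Ω) (by positivity)
    (volume_closedBall_fin_two_eq_ofReal x₁ hR.le).le
  have hC₀ : 0 ≤ CΩ := (norm_nonneg _).trans (hCΩ x₁ hx₁)
  have hω₀ : 0 ≤ ω 0 := hωpos 0 le_rfl
  rw [hν, hν, ← smul_sub, norm_smul, Real.norm_of_nonneg hβ]
  calc β * ‖_‖ ≤ β * (ω 0 * ((volume.restrict Ω).real (closedBall x₂ R ∆ closedBall x₁ R) *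
        (2 * CΩ) + (volume.restrict Ω).real (closedBall x₁ R) * ‖x₂ - x₁‖)) := by
        gcongr
        exact norm_integral_indicator_smul_sub_sub_le measurableSet_closedBall
          measurableSet_closedBall hw hM (ae_restrict_of_forall_mem hΩ hCΩ) (hCΩ x₁ hx₁)
          (hCΩ x₂ hx₂)
    _ ≤ β * (ω 0 * (4 * R * ‖x₂ - x₁‖ * (2 * CΩ) + Real.pi * R ^ 2 * ‖x₂ - x₁‖)) := by
        gcongr
    _ = β * ω 0 * R * (8 * CΩ + Real.pi * R) * ‖x₂ - x₁‖ := by ring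
end

section
/- Let Ω ⊂ ℝ² be a bounded Borel set, let R > 0, α, β ≥ 0, x₀ ∈ ℝ², Δt > 0, and let ω : [0,∞) → [0,∞) be nonincreasing (hence bounded by ω(0)). Let μ_0 be a positive measure on Ω absolutely continuous with respect to L², with density ρ_0 ∈ L¹(Ω) ∩ L^∞(Ω), ρ_0 ≥ 0 a.e. Define recursively, whenever μ_n has a nonnegative density ρ_n, the velocity v_n(x) = α(x₀ − x) + β·∫_Ω (y − x) χ_{B_R(x)}(y) ω(ρ_n(y)) dy, the motion mapping γ_n(x) = x + v_n(x)Δt (assumed to map Ω into Ω, with Δt small enough that the Lipschitz constant of v_n times Δt is less than 1), and μ_{n+1} = (γ_n)_#μ_n. Then: (i) μ_n ≪ L² for all n > 0; (ii) there exists a unique sequence {ρ_n}_{n>0} ⊂ L¹(Ω) ∩ L^∞(Ω), ρ_n ≥ 0 a.e. in Ω, such that dμ_n = ρ_n dx for each n > 0 and ∫_Ω η ρ_{n+1} dx = ∫_Ω (η∘γ_n) ρ_n dx for all bounded Borel η and all n ≥ 0. -/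
/-!
Write `γ = id + Δt v` with `Δt · Lip(v) ≤ Δt K < 1` on `Ω`. Then `γ` is injective on `Ω` and its
inverse is `(1 - Δt K)⁻¹`-Lipschitz on `γ(Ω)`, so `|Ω ∩ γ⁻¹(A)| ≤ (1 - Δt K)⁻² |A|`. Hence if
`μ = ρ dx` on `Ω` with `ρ ∈ L^∞`, then `γ_# μ ≤ ‖ρ‖_∞ (1 - Δt K)⁻² L²`: the push-forward is
absolutely continuous, its Radon–Nikodym derivative is again bounded, and it lives on `Ω` because
`γ(Ω) ⊆ Ω`. Iterating produces the densities, and the weak identity is the change of variables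
formula for `γ_#`. Testing it with indicators determines `ρ_{n+1}` a.e. from `ρ_n`, and `v`
depends on `ρ_n` only through its a.e. class, which gives uniqueness by induction.
-/

open MeasureTheory

/-- The pedestrian model velocity: desired velocity `α(x₀ − x)` toward the target
`x₀` plus the nonlocal interaction velocity
`β ∫_Ω (y − x) χ_{B_R(x)}(y) ω(ρ(y)) dy`. -/
noncomputable def pedVel (Ω : Set (EuclideanSpace ℝ (Fin 2))) (R α β : ℝ)
    (x₀ : EuclideanSpace ℝ (Fin 2)) (ω : ℝ → ℝ)
    (ρ : EuclideanSpace ℝ (Fin 2) → ℝ) (x : EuclideanSpace ℝ (Fin 2)) :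
    EuclideanSpace ℝ (Fin 2) :=
  α • (x₀ - x) + β • ∫ y in Ω,
    Set.indicator (Metric.closedBall x R) (fun z => ω (ρ z)) y • (y - x)

open Measure Module Set
open scoped ENNReal NNReal

namespace MeasureTheory

variable {α : Type*} [MeasurableSpace α] {μ ν : Measure α}

theorem Measure.rnDeriv_le_of_le_smul [SigmaFinite ν] {c : ℝ≥0∞} (h : μ ≤ c • ν) :
    μ.rnDeriv ν ≤ᵐ[ν] fun _ => c := by
  refine ae_le_of_forall_setLIntegral_le_of_sigmaFinite (μ.measurable_rnDeriv ν) fun s _ _ => ?_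
  rw [setLIntegral_const]
  exact (setLIntegral_rnDeriv_le s).trans
    ((h s).trans_eq (by rw [Measure.smul_apply, smul_eq_mul, mul_comm]))

theorem Measure.eq_restrict_withDensity_ofReal_toReal_rnDeriv [SigmaFinite μ] [SigmaFinite ν]
    (hμν : μ ≪ ν) {s : Set α} (hs : MeasurableSet s) (hμs : ∀ᵐ x ∂μ, x ∈ s) :
    μ = (ν.restrict s).withDensity fun x => ENNReal.ofReal (μ.rnDeriv ν x).toReal := by
  have h_ofReal : (fun x => ENNReal.ofReal (μ.rnDeriv ν x).toReal) =ᵐ[ν] μ.rnDeriv ν := by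
    filter_upwards [rnDeriv_lt_top μ ν] with x hx
    exact ENNReal.ofReal_toReal hx.ne
  calc μ = μ.restrict s := (restrict_eq_self_of_ae_mem hμs).symm
    _ = (ν.withDensity (μ.rnDeriv ν)).restrict s := by rw [withDensity_rnDeriv_eq _ _ hμν]
    _ = (ν.restrict s).withDensity (μ.rnDeriv ν) := restrict_withDensity hs _
    _ = _ := (withDensity_congr_ae (ae_restrict_of_ae h_ofReal)).symm

theorem integral_withDensity_ofReal {σ : α → ℝ} (hσ : AEMeasurable σ μ) (hσ0 : 0 ≤ᵐ[μ] σ)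
    (g : α → ℝ) :
    ∫ x, g x ∂μ.withDensity (fun x => ENNReal.ofReal (σ x)) = ∫ x, g x * σ x ∂μ := by
  rw [integral_withDensity_eq_integral_toReal_smul₀ hσ.ennreal_ofReal
    (ae_of_all _ fun _ => ENNReal.ofReal_lt_top)]
  refine integral_congr_ae ?_
  filter_upwards [hσ0] with x hx
  rw [ENNReal.toReal_ofReal hx, smul_eq_mul, mul_comm]

theorem ae_ofReal_le_eLpNorm_top (f : α → ℝ) :
    ∀ᵐ x ∂μ, ENNReal.ofReal (f x) ≤ eLpNorm f ∞ μ := by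
  filter_upwards [ae_le_eLpNormEssSup (f := f) (μ := μ)] with x hx
  rw [eLpNorm_exponent_top]
  calc ENNReal.ofReal (f x) ≤ ENNReal.ofReal |f x| := ENNReal.ofReal_le_ofReal (le_abs_self _)
    _ = ‖f x‖ₑ := (Real.enorm_eq_ofReal_abs _).symm
    _ ≤ _ := hx

theorem ae_eq_of_forall_integral_mul_eq [SigmaFinite μ] {f g : α → ℝ} (hf : Integrable f μ)
    (hg : Integrable g μ)
    (h : ∀ η : α → ℝ, Measurable η → (∃ K, ∀ x, |η x| ≤ K) →
      ∫ x, η x * f x ∂μ = ∫ x, η x * g x ∂μ) :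
    f =ᵐ[μ] g := by
  refine ae_eq_of_forall_setIntegral_eq_of_sigmaFinite (fun s _ _ => hf.integrableOn)
    (fun s _ _ => hg.integrableOn) fun s hs _ => ?_
  have h_ind : ∀ φ : α → ℝ, ∫ x, s.indicator 1 x * φ x ∂μ = ∫ x in s, φ x ∂μ := fun φ => by
    simp_rw [← indicator_mul_left, Pi.one_apply, one_mul]
    exact integral_indicator hs
  rw [← h_ind, ← h_ind]
  refine h _ (measurable_one.indicator hs) ⟨1, fun x => ?_⟩
  by_cases hx : x ∈ s <;> simp [hx]

theorem ae_eq_of_forall_integral_mul_succ_eq [SigmaFinite μ] {Γ : (α → ℝ) → α → α}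
    (hΓ : ∀ σ σ' : α → ℝ, σ =ᵐ[μ] σ' → Γ σ = Γ σ') {ρ ρ' : ℕ → α → ℝ} (h₀ : ρ' 0 = ρ 0)
    (hρ : ∀ n, Integrable (ρ n) μ) (hρ' : ∀ n, Integrable (ρ' n) μ)
    (hweak : ∀ n, ∀ η : α → ℝ, Measurable η → (∃ K, ∀ x, |η x| ≤ K) →
      ∫ x, η x * ρ (n + 1) x ∂μ = ∫ x, η (Γ (ρ n) x) * ρ n x ∂μ)
    (hweak' : ∀ n, ∀ η : α → ℝ, Measurable η → (∃ K, ∀ x, |η x| ≤ K) →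
      ∫ x, η x * ρ' (n + 1) x ∂μ = ∫ x, η (Γ (ρ' n) x) * ρ' n x ∂μ) :
    ∀ n, ρ' n =ᵐ[μ] ρ n := by
  intro n
  induction n with
  | zero => rw [h₀]
  | succ n ih =>
    refine ae_eq_of_forall_integral_mul_eq (hρ' _) (hρ _) fun η hη hηK => ?_
    rw [hweak' n η hη hηK, hweak n η hη hηK, hΓ _ _ ih]
    exact integral_congr_ae (by filter_upwards [ih] with x hx; rw [hx])

end MeasureTheory

theorem LipschitzOnWith.antilipschitzWith_domRestrict_id_add {E : Type*}
    [SeminormedAddCommGroup E] {L : ℝ≥0} {g : E → E} {s : Set E} (hg : LipschitzOnWith L g s)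
    (hL : L < 1) :
    AntilipschitzWith (1 - L)⁻¹ (s.domRestrict fun x => x + g x) := by
  have := isometry_subtype_coe.antilipschitz.add_lipschitzWith hg.to_restrict
    (by rwa [inv_one])
  rwa [inv_one] at this

theorem lipschitzOnWith_const_smul_of_norm_sub_le {E : Type*} [SeminormedAddCommGroup E]
    [NormedSpace ℝ E] {V : E → E} {s : Set E} {c K : ℝ} (hc : 0 ≤ c)
    (hV : ∀ x ∈ s, ∀ y ∈ s, ‖V x - V y‖ ≤ K * ‖x - y‖) :
    LipschitzOnWith (c * K).toNNReal (fun x => c • V x) s := by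
  refine LipschitzOnWith.of_dist_le' fun x hx y hy => ?_
  rw [dist_eq_norm, dist_eq_norm, ← smul_sub, norm_smul, Real.norm_of_nonneg hc, mul_assoc]
  exact mul_le_mul_of_nonneg_left (hV x hx y hy) hc

section Volume

variable {E : Type*} [NormedAddCommGroup E] [InnerProductSpace ℝ E] [FiniteDimensional ℝ E]
  [MeasurableSpace E] [BorelSpace E]

theorem LipschitzOnWith.volume_image_le {K : ℝ≥0} {f : E → E} {s : Set E}
    (hf : LipschitzOnWith K f s) : volume (f '' s) ≤ (K : ℝ≥0∞) ^ finrank ℝ E * volume s := by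
  -- `volume` is a constant multiple of the Hausdorff measure `μH[finrank ℝ E]`
  rw [← InnerProductSpace.euclideanHausdorffMeasure_eq_volume, euclideanHausdorffMeasure_def,
    Measure.smul_apply, Measure.smul_apply, ENNReal.smul_def, ENNReal.smul_def, smul_eq_mul,
    smul_eq_mul, mul_left_comm, ← ENNReal.rpow_natCast]
  exact mul_le_mul_right (hf.hausdorffMeasure_image_le (Nat.cast_nonneg _)) _

theorem AntilipschitzWith.volume_inter_preimage_le {K : ℝ≥0} {f : E → E} {s : Set E}
    (hf : AntilipschitzWith K (s.domRestrict f)) (t : Set E) :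
    volume (s ∩ f ⁻¹' t) ≤ (K : ℝ≥0∞) ^ finrank ℝ E * volume t := by
  have hinj : InjOn f s := fun x hx y hy hxy =>
    congrArg Subtype.val (hf.injective (a₁ := ⟨x, hx⟩) (a₂ := ⟨y, hy⟩) hxy)
  have hinv : LipschitzOnWith K (Function.invFunOn f s) (f '' s) := by
    refine LipschitzOnWith.of_dist_le_mul ?_
    rintro _ ⟨x, hx, rfl⟩ _ ⟨y, hy, rfl⟩
    rw [hinj.leftInvOn_invFunOn hx, hinj.leftInvOn_invFunOn hy]
    exact hf.le_mul_dist ⟨x, hx⟩ ⟨y, hy⟩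
  calc volume (s ∩ f ⁻¹' t) ≤ volume (Function.invFunOn f s '' (f '' s ∩ t)) := by
        refine measure_mono fun x ⟨hx, hxt⟩ => ⟨f x, ⟨⟨x, hx, rfl⟩, hxt⟩, ?_⟩
        exact hinj.leftInvOn_invFunOn hx
    _ ≤ (K : ℝ≥0∞) ^ finrank ℝ E * volume (f '' s ∩ t) :=
        (hinv.mono inter_subset_left).volume_image_le
    _ ≤ (K : ℝ≥0∞) ^ finrank ℝ E * volume t := by gcongr; exact inter_subset_right


noncomputable def pushforwardDensity (Ω : Set E) (Γ : E → E) (σ : E → ℝ) : E → ℝ :=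
  fun x => ((((volume.restrict Ω).withDensity fun y => ENNReal.ofReal (σ y)).map Γ).rnDeriv
    volume x).toReal

variable {Ω : Set E} {Γ : E → E} {σ : E → ℝ}

theorem measurable_pushforwardDensity : Measurable (pushforwardDensity Ω Γ σ) :=
  (Measure.measurable_rnDeriv _ _).ennreal_toReal

theorem pushforwardDensity_nonneg (x : E) : 0 ≤ pushforwardDensity Ω Γ σ x :=
  ENNReal.toReal_nonneg

theorem map_withDensity_le_smul_volume (hΩ : MeasurableSet Ω)
    (hΓ : AEMeasurable Γ (volume.restrict Ω)) {K : ℝ≥0}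
    (hΓK : AntilipschitzWith K (Ω.domRestrict Γ)) :
    ((volume.restrict Ω).withDensity fun x => ENNReal.ofReal (σ x)).map Γ
      ≤ (eLpNorm σ ∞ (volume.restrict Ω) * (K : ℝ≥0∞) ^ finrank ℝ E) • volume := by
  refine Measure.le_iff.2 fun A hA => ?_
  rw [map_apply_of_aemeasurable (hΓ.mono_ac (withDensity_absolutelyContinuous _ _)) hA,
    withDensity_apply' _ _, Measure.smul_apply, smul_eq_mul, mul_assoc]
  calc ∫⁻ x in Γ ⁻¹' A, ENNReal.ofReal (σ x) ∂volume.restrict Ω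
      ≤ ∫⁻ _ in Γ ⁻¹' A, eLpNorm σ ∞ (volume.restrict Ω) ∂volume.restrict Ω :=
        lintegral_mono_ae (ae_restrict_of_ae (ae_ofReal_le_eLpNorm_top σ))
    _ = eLpNorm σ ∞ (volume.restrict Ω) * volume (Ω ∩ Γ ⁻¹' A) := by
        rw [setLIntegral_const, restrict_apply' hΩ, inter_comm]
    _ ≤ _ := by gcongr; exact hΓK.volume_inter_preimage_le A

theorem memLp_top_pushforwardDensity (hΩ : MeasurableSet Ω) (hσ : MemLp σ ∞ (volume.restrict Ω))
    (hΓ : AEMeasurable Γ (volume.restrict Ω)) {K : ℝ≥0}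
    (hΓK : AntilipschitzWith K (Ω.domRestrict Γ)) :
    MemLp (pushforwardDensity Ω Γ σ) ∞ volume := by
  have hC : eLpNorm σ ∞ (volume.restrict Ω) * (K : ℝ≥0∞) ^ finrank ℝ E ≠ ∞ :=
    ENNReal.mul_ne_top hσ.2.ne (ENNReal.pow_ne_top ENNReal.coe_ne_top)
  refine memLp_top_of_bound measurable_pushforwardDensity.aestronglyMeasurable
    (eLpNorm σ ∞ (volume.restrict Ω) * (K : ℝ≥0∞) ^ finrank ℝ E).toReal ?_
  filter_upwards [rnDeriv_le_of_le_smul (map_withDensity_le_smul_volume hΩ hΓ hΓK)] with x hx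
  rw [Real.norm_of_nonneg (pushforwardDensity_nonneg x)]
  exact ENNReal.toReal_mono hC hx

theorem integrable_pushforwardDensity (hσ : IntegrableOn σ Ω) :
    Integrable (pushforwardDensity Ω Γ σ) volume :=
  have := isFiniteMeasure_withDensity_ofReal hσ.2
  Measure.integrable_toReal_rnDeriv

theorem map_withDensity_eq_withDensity_pushforwardDensity (hΩ : MeasurableSet Ω)
    (hσ : IntegrableOn σ Ω) (hΓ : AEMeasurable Γ (volume.restrict Ω)) (hΓΩ : MapsTo Γ Ω Ω) {K : ℝ≥0}
    (hΓK : AntilipschitzWith K (Ω.domRestrict Γ)) :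
    ((volume.restrict Ω).withDensity fun x => ENNReal.ofReal (σ x)).map Γ
      = (volume.restrict Ω).withDensity fun x => ENNReal.ofReal (pushforwardDensity Ω Γ σ x) := by
  have := isFiniteMeasure_withDensity_ofReal hσ.2
  refine eq_restrict_withDensity_ofReal_toReal_rnDeriv
    (absolutelyContinuous_of_le_smul (map_withDensity_le_smul_volume hΩ hΓ hΓK)) hΩ ?_
  refine (ae_map_iff (hΓ.mono_ac (withDensity_absolutelyContinuous _ _)) hΩ).2 ?_
  filter_upwards [(withDensity_absolutelyContinuous _ _).ae_le (ae_restrict_mem hΩ)] with x hx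
  exact hΓΩ hx

theorem setIntegral_mul_pushforwardDensity (hΩ : MeasurableSet Ω) (hσ : IntegrableOn σ Ω)
    (hσ₀ : 0 ≤ᵐ[volume.restrict Ω] σ)
    (hΓ : AEMeasurable Γ (volume.restrict Ω)) (hΓΩ : MapsTo Γ Ω Ω) {K : ℝ≥0}
    (hΓK : AntilipschitzWith K (Ω.domRestrict Γ)) {η : E → ℝ} (hη : Measurable η) :
    ∫ x in Ω, η x * pushforwardDensity Ω Γ σ x = ∫ x in Ω, η (Γ x) * σ x := by
  rw [← integral_withDensity_ofReal measurable_pushforwardDensity.aemeasurable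
      (ae_of_all _ pushforwardDensity_nonneg),
    ← map_withDensity_eq_withDensity_pushforwardDensity hΩ hσ hΓ hΓΩ hΓK,
    integral_map (hΓ.mono_ac (withDensity_absolutelyContinuous _ _)) hη.aestronglyMeasurable,
    integral_withDensity_ofReal hσ.aemeasurable hσ₀]

noncomputable def pushforwardDensitySeq (Ω : Set E) (Γ : (E → ℝ) → E → E) (ρ₀ : E → ℝ) :
    ℕ → E → ℝ
  | 0 => ρ₀
  | n + 1 =>
    pushforwardDensity Ω (Γ (pushforwardDensitySeq Ω Γ ρ₀ n)) (pushforwardDensitySeq Ω Γ ρ₀ n)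

theorem integrableOn_memLp_nonneg_pushforwardDensitySeq {Γ : (E → ℝ) → E → E} {ρ₀ : E → ℝ}
    (hΩ : MeasurableSet Ω)
    (hρ₀ : IntegrableOn ρ₀ Ω) (hρ₀' : MemLp ρ₀ ∞ (volume.restrict Ω))
    (hρ₀₀ : 0 ≤ᵐ[volume.restrict Ω] ρ₀) {K : ℝ≥0}
    (hΓ : ∀ σ, IntegrableOn σ Ω → 0 ≤ᵐ[volume.restrict Ω] σ →
      AEMeasurable (Γ σ) (volume.restrict Ω) ∧ AntilipschitzWith K (Ω.domRestrict (Γ σ)))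
    (n : ℕ) :
    IntegrableOn (pushforwardDensitySeq Ω Γ ρ₀ n) Ω ∧
      MemLp (pushforwardDensitySeq Ω Γ ρ₀ n) ∞ (volume.restrict Ω) ∧
      0 ≤ᵐ[volume.restrict Ω] pushforwardDensitySeq Ω Γ ρ₀ n := by
  induction n with
  | zero => exact ⟨hρ₀, hρ₀', hρ₀₀⟩
  | succ n ih =>
    obtain ⟨hΓm, hΓK⟩ := hΓ _ ih.1 ih.2.2
    exact ⟨(integrable_pushforwardDensity ih.1).integrableOn,
      (memLp_top_pushforwardDensity hΩ ih.2.1 hΓm hΓK).restrict _,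
      ae_of_all _ pushforwardDensity_nonneg⟩

end Volume

theorem pedVel_congr_ae {Ω : Set (EuclideanSpace ℝ (Fin 2))} (R α β : ℝ)
    (x₀ : EuclideanSpace ℝ (Fin 2)) (ω : ℝ → ℝ) {σ σ' : EuclideanSpace ℝ (Fin 2) → ℝ}
    (h : σ =ᵐ[volume.restrict Ω] σ') :
    pedVel Ω R α β x₀ ω σ = pedVel Ω R α β x₀ ω σ' := by
  funext x
  refine congrArg (α • (x₀ - x) + β • ·) (integral_congr_ae ?_)
  filter_upwards [h] with y hy
  simp only [indicator, hy]

theorem stmt_19_general (Ω : Set (EuclideanSpace ℝ (Fin 2))) (hΩ : MeasurableSet Ω)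
    (R α β : ℝ)
    (x₀ : EuclideanSpace ℝ (Fin 2)) (Δt : ℝ) (hΔt : 0 < Δt)
    (ω : ℝ → ℝ)
    (ρ₀ : EuclideanSpace ℝ (Fin 2) → ℝ)
    (hρ₀int : IntegrableOn ρ₀ Ω) (hρ₀infty : MemLp ρ₀ ⊤ (volume.restrict Ω))
    (hρ₀pos : 0 ≤ᵐ[volume.restrict Ω] ρ₀)
    (hmaps : ∀ σ : EuclideanSpace ℝ (Fin 2) → ℝ, IntegrableOn σ Ω →
      0 ≤ᵐ[volume.restrict Ω] σ →
      ∀ x ∈ Ω, x + Δt • pedVel Ω R α β x₀ ω σ x ∈ Ω)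
    (hΔtsmall : ∃ K : ℝ, 0 ≤ K ∧ Δt * K < 1 ∧
      ∀ σ : EuclideanSpace ℝ (Fin 2) → ℝ, IntegrableOn σ Ω →
        0 ≤ᵐ[volume.restrict Ω] σ →
        ∀ x ∈ Ω, ∀ y ∈ Ω,
          ‖pedVel Ω R α β x₀ ω σ x - pedVel Ω R α β x₀ ω σ y‖ ≤ K * ‖x - y‖) :
    ∃ ρ : ℕ → EuclideanSpace ℝ (Fin 2) → ℝ,
      ρ 0 = ρ₀ ∧
      (∀ n, IntegrableOn (ρ n) Ω) ∧
      (∀ n, MemLp (ρ n) ⊤ (volume.restrict Ω)) ∧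
      (∀ n, 0 ≤ᵐ[volume.restrict Ω] ρ n) ∧
      (∀ n, ∀ η : EuclideanSpace ℝ (Fin 2) → ℝ, Measurable η → (∃ K, ∀ x, |η x| ≤ K) →
        ∫ x in Ω, η x * ρ (n + 1) x
          = ∫ x in Ω, η (x + Δt • pedVel Ω R α β x₀ ω (ρ n) x) * ρ n x) ∧
      (∀ μ : ℕ → Measure (EuclideanSpace ℝ (Fin 2)),
        μ 0 = (volume.restrict Ω).withDensity (fun x => ENNReal.ofReal (ρ₀ x)) →
        (∀ m, μ (m + 1)
          = (μ m).map (fun x => x + Δt • pedVel Ω R α β x₀ ω (ρ m) x)) →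
        ∀ n, μ n ≪ volume ∧
          μ n = (volume.restrict Ω).withDensity (fun x => ENNReal.ofReal (ρ n x))) ∧
      (∀ ρ' : ℕ → EuclideanSpace ℝ (Fin 2) → ℝ,
        ρ' 0 = ρ₀ →
        (∀ n, IntegrableOn (ρ' n) Ω) →
        (∀ n, MemLp (ρ' n) ⊤ (volume.restrict Ω)) →
        (∀ n, 0 ≤ᵐ[volume.restrict Ω] ρ' n) →
        (∀ n, ∀ η : EuclideanSpace ℝ (Fin 2) → ℝ, Measurable η →
          (∃ K, ∀ x, |η x| ≤ K) →
          ∫ x in Ω, η x * ρ' (n + 1) x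
            = ∫ x in Ω, η (x + Δt • pedVel Ω R α β x₀ ω (ρ' n) x) * ρ' n x) →
        ∀ n, ρ' n =ᵐ[volume.restrict Ω] ρ n) := by
  obtain ⟨K, -, hΔtK, hlip⟩ := hΔtsmall
  set Γ : (EuclideanSpace ℝ (Fin 2) → ℝ) → EuclideanSpace ℝ (Fin 2) → EuclideanSpace ℝ (Fin 2) :=
    fun σ x => x + Δt • pedVel Ω R α β x₀ ω σ x
  have hΓ : ∀ σ, IntegrableOn σ Ω → 0 ≤ᵐ[volume.restrict Ω] σ →
      AEMeasurable (Γ σ) (volume.restrict Ω) ∧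
        AntilipschitzWith (1 - (Δt * K).toNNReal)⁻¹ (Ω.domRestrict (Γ σ)) := fun σ hσ hσ₀ => by
    have hL := lipschitzOnWith_const_smul_of_norm_sub_le hΔt.le (hlip σ hσ hσ₀)
    exact ⟨(continuousOn_id.add hL.continuousOn).aemeasurable hΩ,
      hL.antilipschitzWith_domRestrict_id_add (Real.toNNReal_lt_one.2 hΔtK)⟩
  set ρ := pushforwardDensitySeq Ω Γ ρ₀
  have hρ := integrableOn_memLp_nonneg_pushforwardDensitySeq hΩ hρ₀int hρ₀infty hρ₀pos hΓ
  have hΓρ n := hΓ (ρ n) (hρ n).1 (hρ n).2.2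
  have hmapsρ n : MapsTo (Γ (ρ n)) Ω Ω := hmaps (ρ n) (hρ n).1 (hρ n).2.2
  have hweak n η (hη : Measurable η) (_ : ∃ K, ∀ x, |η x| ≤ K) :=
    setIntegral_mul_pushforwardDensity hΩ (hρ n).1 (hρ n).2.2 (hΓρ n).1 (hmapsρ n) (hΓρ n).2 hη
  refine ⟨ρ, rfl, fun n => (hρ n).1, fun n => (hρ n).2.1, fun n => (hρ n).2.2, hweak,
    fun μ hμ₀ hμ n => ?_, fun ρ' h₀ hρ' _ _ hweak' => ae_eq_of_forall_integral_mul_succ_eq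
      (fun _ _ h => by simp only [Γ, pedVel_congr_ae R α β x₀ ω h]) h₀ (fun n => (hρ n).1) hρ'
      hweak hweak'⟩
  have hμn : μ n = (volume.restrict Ω).withDensity fun x => ENNReal.ofReal (ρ n x) := by
    induction n with
    | zero => exact hμ₀
    | succ n ih =>
      rw [hμ n, ih]
      exact map_withDensity_eq_withDensity_pushforwardDensity hΩ (hρ n).1 (hΓρ n).1 (hmapsρ n)
        (hΓρ n).2
  refine ⟨?_, hμn⟩
  rw [hμn]
  exact (withDensity_absolutelyContinuous _ _).trans (absolutelyContinuous_of_le restrict_le_self)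

/-- Well-posedness of the pedestrian flow model: starting from
`ρ₀ ∈ L¹(Ω) ∩ L^∞(Ω)`, `ρ₀ ≥ 0` a.e., with motion mappings
`γ n x = x + Δt • pedVel(ρ n) x` mapping `Ω` into `Ω` and `Δt·Lip(v_n) < 1`,
there is a unique (up to a.e. equality) sequence of nonnegative densities
`ρ n ∈ L¹(Ω) ∩ L^∞(Ω)` with `∫ η ρ_{n+1} = ∫ (η∘γ_n) ρ_n` for all bounded Borel
`η`; the associated measures satisfy `μ_{n+1} = (γ_n)_# μ_n`, `dμ_n = ρ_n dx` and
`μ_n ≪ L²` for all `n`. -/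
theorem stmt_19 (Ω : Set (EuclideanSpace ℝ (Fin 2))) (hΩ : MeasurableSet Ω)
    (hΩbd : Bornology.IsBounded Ω)
    (R α β : ℝ) (hR : 0 < R) (hα : 0 ≤ α) (hβ : 0 ≤ β)
    (x₀ : EuclideanSpace ℝ (Fin 2)) (Δt : ℝ) (hΔt : 0 < Δt)
    (ω : ℝ → ℝ)
    (hωmono : ∀ s t : ℝ, 0 ≤ s → s ≤ t → ω t ≤ ω s)
    (hωpos : ∀ s : ℝ, 0 ≤ s → 0 ≤ ω s)
    (ρ₀ : EuclideanSpace ℝ (Fin 2) → ℝ)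
    (hρ₀int : IntegrableOn ρ₀ Ω) (hρ₀infty : MemLp ρ₀ ⊤ (volume.restrict Ω))
    (hρ₀pos : 0 ≤ᵐ[volume.restrict Ω] ρ₀)
    (hmaps : ∀ σ : EuclideanSpace ℝ (Fin 2) → ℝ, IntegrableOn σ Ω →
      0 ≤ᵐ[volume.restrict Ω] σ →
      ∀ x ∈ Ω, x + Δt • pedVel Ω R α β x₀ ω σ x ∈ Ω)
    (hΔtsmall : ∃ K : ℝ, 0 ≤ K ∧ Δt * K < 1 ∧
      ∀ σ : EuclideanSpace ℝ (Fin 2) → ℝ, IntegrableOn σ Ω →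
        0 ≤ᵐ[volume.restrict Ω] σ →
        ∀ x ∈ Ω, ∀ y ∈ Ω,
          ‖pedVel Ω R α β x₀ ω σ x - pedVel Ω R α β x₀ ω σ y‖ ≤ K * ‖x - y‖) :
    ∃ ρ : ℕ → EuclideanSpace ℝ (Fin 2) → ℝ,
      ρ 0 = ρ₀ ∧
      (∀ n, IntegrableOn (ρ n) Ω) ∧
      (∀ n, MemLp (ρ n) ⊤ (volume.restrict Ω)) ∧
      (∀ n, 0 ≤ᵐ[volume.restrict Ω] ρ n) ∧
      (∀ n, ∀ η : EuclideanSpace ℝ (Fin 2) → ℝ, Measurable η → (∃ K, ∀ x, |η x| ≤ K) →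
        ∫ x in Ω, η x * ρ (n + 1) x
          = ∫ x in Ω, η (x + Δt • pedVel Ω R α β x₀ ω (ρ n) x) * ρ n x) ∧
      (∀ μ : ℕ → Measure (EuclideanSpace ℝ (Fin 2)),
        μ 0 = (volume.restrict Ω).withDensity (fun x => ENNReal.ofReal (ρ₀ x)) →
        (∀ m, μ (m + 1)
          = (μ m).map (fun x => x + Δt • pedVel Ω R α β x₀ ω (ρ m) x)) →
        ∀ n, μ n ≪ volume ∧
          μ n = (volume.restrict Ω).withDensity (fun x => ENNReal.ofReal (ρ n x))) ∧
      (∀ ρ' : ℕ → EuclideanSpace ℝ (Fin 2) → ℝ,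
        ρ' 0 = ρ₀ →
        (∀ n, IntegrableOn (ρ' n) Ω) →
        (∀ n, MemLp (ρ' n) ⊤ (volume.restrict Ω)) →
        (∀ n, 0 ≤ᵐ[volume.restrict Ω] ρ' n) →
        (∀ n, ∀ η : EuclideanSpace ℝ (Fin 2) → ℝ, Measurable η →
          (∃ K, ∀ x, |η x| ≤ K) →
          ∫ x in Ω, η x * ρ' (n + 1) x
            = ∫ x in Ω, η (x + Δt • pedVel Ω R α β x₀ ω (ρ' n) x) * ρ' n x) →
        ∀ n, ρ' n =ᵐ[volume.restrict Ω] ρ n) :=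
  stmt_19_general Ω hΩ R α β x₀ Δt hΔt ω ρ₀ hρ₀int hρ₀infty hρ₀pos hmaps hΔtsmall
end
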